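/- Let M be a finite matroid and N a minor of M (i.e., N = M/C∖D for some disjoint sets C, D ⊆ E(M)). Then the path-width of N is at most the path-width of M, that is, pw(N) ≤ pw(M). -/

import Mathlib

/-- A finite matroid on ground set `E`, given by its rank function, which satisfies
`r ∅ = 0`, the unit-increase property, and submodularity (on subsets of `E`). -/
structure FinMatroid (α : Type*) [DecidableEq α] where
  E : Finset α
  r : Finset α → ℕ
  r_empty : r ∅ = 0
  r_le_insert : ∀ X ⊆ E, ∀ e ∈ E, r X ≤ r (insert e X)
  r_insert_le : ∀ X ⊆ E, ∀ e ∈ E, r (insert e X) ≤ r X + 1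
  r_submod : ∀ X ⊆ E, ∀ Y ⊆ E, r (X ∪ Y) + r (X ∩ Y) ≤ r X + r Y

namespace FinMatroid

variable {α : Type*} [DecidableEq α]

/-- A set is independent if it is a subset of the ground set whose rank equals its
cardinality. -/
def Indep (M : FinMatroid α) (X : Finset α) : Prop :=
  X ⊆ M.E ∧ M.r X = X.card

/-- A set is dependent if it is a subset of the ground set that is not independent. -/
def Dep (M : FinMatroid α) (X : Finset α) : Prop :=
  X ⊆ M.E ∧ M.r X ≠ X.card

/-- A circuit is a minimal dependent set: a dependent set all of whose proper subsets
are independent. -/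
def Circuit (M : FinMatroid α) (C : Finset α) : Prop :=
  M.Dep C ∧ ∀ C' ⊂ C, M.Indep C'

/-- The connectivity function `λ_M(X) = r(X) + r(E \ X) - r(E)`. -/
def lambda (M : FinMatroid α) (X : Finset α) : ℤ :=
  (M.r X : ℤ) + (M.r (M.E \ X) : ℤ) - (M.r M.E : ℤ)

/-- `μ_M(X, A) = r(X ∪ A) + r((E \ X) ∪ A) - r(E)`. -/
def mu (M : FinMatroid α) (X A : Finset α) : ℤ :=
  (M.r (X ∪ A) : ℤ) + (M.r ((M.E \ X) ∪ A) : ℤ) - (M.r M.E : ℤ)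

/-- The closure `cl_M(X) = {e ∈ E : r(X ∪ {e}) = r(X)}`. -/
def cl (M : FinMatroid α) (X : Finset α) : Finset α :=
  M.E.filter fun e => M.r (insert e X) = M.r X

/-- The width of the path-decomposition (ordering) given by the list `L`:
the maximum of `λ_M({e₁, …, e_i})` over the nonempty prefixes of `L`. -/
def pdWidth (M : FinMatroid α) (L : List α) : ℤ :=
  ((List.range L.length).map fun i => M.lambda (L.take (i + 1)).toFinset).foldr max 0

/-- The path-width of a matroid: the minimum width over all orderings of the ground
set. -/
noncomputable def pathwidth (M : FinMatroid α) : ℤ :=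
  sInf (M.pdWidth '' { L : List α | L.Nodup ∧ L.toFinset = M.E })

end FinMatroid

/-!
Filtering an ordering of `E(M)` down to `E(N)` gives an ordering of `E(N)` whose prefixes are the
sets `P ∩ E(N)` for prefixes `P` of the original one, so it suffices to show
`λ_N(P ∩ E(N)) ≤ λ_M(P)`. Write `λ_M(P) = ⊓_M(P, E ∖ P)` with the local connectivity
`⊓_M(A, B) = r(A) + r(B) - r(A ∪ B)`, which submodularity makes monotone in each argument.
Distributing the contracted set as `C = (C ∩ P) ∪ (C ∖ P)` between the two sides, submodularity
gives `λ_N(X) ≤ ⊓_M(X ∪ (C ∩ P), Y ∪ (C ∖ P))` for `X = P ∩ E(N)`, `Y = E(N) ∖ P`, and the two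
arguments lie in `P` and `E ∖ P` respectively.
-/

theorem List.foldr_max_le {β : Type*} [LinearOrder β] {l : List β} {b c : β} (hb : b ≤ c)
    (h : ∀ x ∈ l, x ≤ c) : l.foldr max b ≤ c := by
  induction l with
  | nil => exact hb
  | cons x l ih =>
    exact max_le (h x List.mem_cons_self) (ih fun y hy => h y (List.mem_cons_of_mem x hy))

theorem List.le_foldr_max {β : Type*} [LinearOrder β] (l : List β) (b : β) : b ≤ l.foldr max b := by
  induction l with
  | nil => exact le_rfl
  | cons x l ih => exact ih.trans (le_max_right _ _)

theorem List.exists_filter_take_eq_take_filter {β : Type*} (p : β → Bool) (L : List β) (k : ℕ) :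
    ∃ j ≤ L.length, (L.take j).filter p = (L.filter p).take k := by
  induction L generalizing k with
  | nil => exact ⟨0, le_rfl, by simp⟩
  | cons a L ih =>
    cases k with
    | zero => exact ⟨0, Nat.zero_le _, by simp⟩
    | succ k =>
      by_cases hpa : p a
      · obtain ⟨j, hj, hjk⟩ := ih k
        exact ⟨j + 1, by simpa using hj, by simp [List.filter_cons_of_pos hpa, hjk]⟩
      · obtain ⟨j, hj, hjk⟩ := ih (k + 1)
        exact ⟨j + 1, by simpa using hj, by simp [List.filter_cons_of_neg hpa, hjk]⟩

namespace FinMatroid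

open Finset

variable {α : Type*} [DecidableEq α] (M : FinMatroid α)

theorem r_le_r_union {X : Finset α} (hX : X ⊆ M.E) {S : Finset α} (hS : S ⊆ M.E) :
    M.r X ≤ M.r (X ∪ S) := by
  induction S using Finset.induction_on with
  | empty => simp
  | insert a S _ ih =>
    have hS' : S ⊆ M.E := (subset_insert a S).trans hS
    rw [union_insert]
    exact (ih hS').trans (M.r_le_insert _ (union_subset hX hS') a (hS (mem_insert_self a S)))

theorem r_mono {X Y : Finset α} (hY : Y ⊆ M.E) (hXY : X ⊆ Y) : M.r X ≤ M.r Y := by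
  have h := M.r_le_r_union (S := Y \ X) (hXY.trans hY) (sdiff_subset.trans hY)
  rwa [union_sdiff_of_subset hXY] at h

theorem r_union_add_r_le {X Y Z : Finset α} (hX : X ⊆ M.E) (hY : Y ⊆ M.E) (hZ : Z ⊆ X ∩ Y) :
    M.r (X ∪ Y) + M.r Z ≤ M.r X + M.r Y :=
  (Nat.add_le_add_left (M.r_mono (inter_subset_left.trans hX) hZ) _).trans (M.r_submod X hX Y hY)

theorem r_union_le {X Y : Finset α} (hX : X ⊆ M.E) (hY : Y ⊆ M.E) :
    M.r (X ∪ Y) ≤ M.r X + M.r Y := by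
  simpa [M.r_empty] using M.r_union_add_r_le hX hY (empty_subset _)

theorem r_union_add_r_union_le {X Y C₁ C₂ : Finset α} (hX : X ⊆ M.E) (hY : Y ⊆ M.E)
    (hC₁ : C₁ ⊆ M.E) (hC₂ : C₂ ⊆ M.E) :
    M.r (X ∪ (C₁ ∪ C₂)) + M.r (Y ∪ (C₁ ∪ C₂)) ≤
      M.r (X ∪ C₁) + M.r (Y ∪ C₂) + M.r (C₁ ∪ C₂) := by
  have hC : C₁ ∪ C₂ ⊆ M.E := union_subset hC₁ hC₂
  have hX' := M.r_union_add_r_le (union_subset hX hC₁) hC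
    (subset_inter subset_union_right subset_union_left)
  have hY' := M.r_union_add_r_le (union_subset hY hC₂) hC
    (subset_inter subset_union_right subset_union_right)
  rw [union_assoc, ← union_assoc C₁, union_self] at hX'
  rw [show Y ∪ C₂ ∪ (C₁ ∪ C₂) = Y ∪ (C₁ ∪ C₂) by grind] at hY'
  have := M.r_union_le hC₁ hC₂
  omega

def localConn (A B : Finset α) : ℤ :=
  M.r A + M.r B - M.r (A ∪ B)

theorem lambda_eq_localConn {P : Finset α} (hP : P ⊆ M.E) :
    M.lambda P = M.localConn P (M.E \ P) := by
  rw [lambda, localConn, union_sdiff_of_subset hP]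

theorem localConn_comm (A B : Finset α) : M.localConn A B = M.localConn B A := by
  rw [localConn, localConn, union_comm]
  ring

theorem localConn_mono_left {A A' B : Finset α} (hA : A ⊆ A') (hE : A' ∪ B ⊆ M.E) :
    M.localConn A B ≤ M.localConn A' B := by
  have h := M.r_union_add_r_le (subset_union_left.trans hE)
    (union_subset (hA.trans (subset_union_left.trans hE)) (subset_union_right.trans hE))
    (subset_inter hA subset_union_left)
  rw [← union_assoc, union_eq_left.mpr hA] at h
  simp only [localConn]
  omega

theorem localConn_mono {A A' B B' : Finset α} (hA : A ⊆ A') (hB : B ⊆ B') (hE : A' ∪ B' ⊆ M.E) :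
    M.localConn A B ≤ M.localConn A' B' :=
  calc M.localConn A B ≤ M.localConn A' B :=
        M.localConn_mono_left hA ((union_subset_union_right hB).trans hE)
    _ = M.localConn B A' := M.localConn_comm A' B
    _ ≤ M.localConn B' A' := M.localConn_mono_left hB (union_comm B' A' ▸ hE)
    _ = M.localConn A' B' := M.localConn_comm B' A'

theorem lambda_contract_restrict_le (N : FinMatroid α) {C P : Finset α} (hC : C ⊆ M.E)
    (hNE : N.E ⊆ M.E) (hNr : ∀ Y ⊆ N.E, N.r Y = M.r (Y ∪ C) - M.r C) (hP : P ⊆ M.E) :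
    N.lambda (P ∩ N.E) ≤ M.lambda P := by
  set X := P ∩ N.E
  set Y := N.E \ P
  have hNr' : ∀ Z ⊆ N.E, (N.r Z : ℤ) = M.r (Z ∪ C) - M.r C := fun Z hZ => by
    rw [hNr Z hZ, Nat.cast_sub (M.r_mono (union_subset (hZ.trans hNE) hC) subset_union_right)]
  have hunion : N.E ∪ C = (X ∪ C ∩ P) ∪ (Y ∪ C \ P) := by grind
  have key := M.r_union_add_r_union_le (X := X) (Y := Y) (C₁ := C ∩ P) (C₂ := C \ P)
    (inter_subset_right.trans hNE) (sdiff_subset.trans hNE)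
    (inter_subset_left.trans hC) (sdiff_subset.trans hC)
  rw [union_comm (C ∩ P), sdiff_union_inter] at key
  calc N.lambda X = M.r (X ∪ C) + M.r (Y ∪ C) - M.r (N.E ∪ C) - M.r C := by
        rw [lambda, sdiff_inter_self_right, hNr' X inter_subset_right, hNr' Y sdiff_subset,
          hNr' N.E subset_rfl]
        ring
    _ ≤ M.localConn (X ∪ C ∩ P) (Y ∪ C \ P) := by
        rw [localConn, ← hunion]
        omega
    _ ≤ M.localConn P (M.E \ P) :=
        M.localConn_mono (union_subset inter_subset_left inter_subset_right)
          (union_subset (sdiff_subset_sdiff hNE subset_rfl) (sdiff_subset_sdiff hC subset_rfl))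
          (union_sdiff_of_subset hP).subset
    _ = M.lambda P := (M.lambda_eq_localConn hP).symm

theorem lambda_empty : M.lambda ∅ = 0 := by
  simp [lambda, M.r_empty]

theorem pdWidth_nonneg (L : List α) : 0 ≤ M.pdWidth L :=
  List.le_foldr_max _ 0

theorem lambda_take_le_pdWidth (L : List α) {j : ℕ} (hj : j ≤ L.length) :
    M.lambda (L.take j).toFinset ≤ M.pdWidth L := by
  cases j with
  | zero => simpa [M.lambda_empty] using M.pdWidth_nonneg L
  | succ j =>
    exact List.le_max_of_le' 0 (List.mem_map_of_mem (List.mem_range.mpr (by omega))) le_rfl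

theorem pdWidth_le {L : List α} {c : ℤ} (hc : 0 ≤ c)
    (h : ∀ j ≤ L.length, M.lambda (L.take j).toFinset ≤ c) : M.pdWidth L ≤ c := by
  refine List.foldr_max_le hc fun x hx => ?_
  obtain ⟨i, hi, rfl⟩ := List.mem_map.mp hx
  exact h (i + 1) (List.mem_range.mp hi)

variable {M} {N : FinMatroid α}

theorem pdWidth_filter_le {L : List α} (hL : L.toFinset ⊆ M.E)
    (h : ∀ P ⊆ M.E, N.lambda (P ∩ N.E) ≤ M.lambda P) :
    N.pdWidth (L.filter (· ∈ N.E)) ≤ M.pdWidth L := by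
  refine N.pdWidth_le (M.pdWidth_nonneg L) fun k _ => ?_
  obtain ⟨j, hj, hjk⟩ := L.exists_filter_take_eq_take_filter (· ∈ N.E) k
  have hprefix : ((L.filter (· ∈ N.E)).take k).toFinset = (L.take j).toFinset ∩ N.E := by
    rw [← hjk]
    ext
    simp
  have hsub : (L.take j).toFinset ⊆ M.E := fun x hx =>
    hL (List.mem_toFinset.mpr ((List.take_sublist j L).subset (List.mem_toFinset.mp hx)))
  rw [hprefix]
  exact (h _ hsub).trans (M.lambda_take_le_pdWidth L hj)

theorem pathwidth_le_of_forall_exists_pdWidth_le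
    (h : ∀ L : List α, L.Nodup → L.toFinset = M.E →
      ∃ L' : List α, L'.Nodup ∧ L'.toFinset = N.E ∧ N.pdWidth L' ≤ M.pdWidth L) :
    N.pathwidth ≤ M.pathwidth := by
  refine le_csInf ⟨_, M.E.toList, ⟨M.E.nodup_toList, M.E.toList_toFinset⟩, rfl⟩ ?_
  rintro _ ⟨L, ⟨hnd, hL⟩, rfl⟩
  obtain ⟨L', hnd', hL', hw⟩ := h L hnd hL
  have hbdd : BddBelow (N.pdWidth '' { L : List α | L.Nodup ∧ L.toFinset = N.E }) :=
    ⟨0, by rintro _ ⟨L, -, rfl⟩; exact N.pdWidth_nonneg L⟩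
  exact (csInf_le hbdd ⟨L', ⟨hnd', hL'⟩, rfl⟩).trans hw

end FinMatroid

open FinMatroid in
theorem pathwidth_minor_le_general {α : Type*} [DecidableEq α] (M N : FinMatroid α)
    (C D : Finset α) (hC : C ⊆ M.E)
    (hNE : N.E = (M.E \ C) \ D)
    (hNr : ∀ Y ⊆ N.E, N.r Y = M.r (Y ∪ C) - M.r C) :
    N.pathwidth ≤ M.pathwidth := by
  have hNM : N.E ⊆ M.E := hNE ▸ Finset.sdiff_subset.trans Finset.sdiff_subset
  refine pathwidth_le_of_forall_exists_pdWidth_le fun L hnd hL =>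
    ⟨L.filter (· ∈ N.E), hnd.filter _, ?_, ?_⟩
  · ext x
    simpa [← hL] using fun hx => hNM hx
  · exact pdWidth_filter_le hL.subset fun P hP => M.lambda_contract_restrict_le N hC hNM hNr hP

open FinMatroid in
/-- If `N = M / C \ D` is a minor of the finite matroid `M` (contraction of `C` and
deletion of `D`, so that `N` has ground set `(E(M) \ C) \ D` and rank function
`r_N(Y) = r_M(Y ∪ C) - r_M(C)`), then `pw(N) ≤ pw(M)`. -/
theorem pathwidth_minor_le {α : Type*} [DecidableEq α] (M N : FinMatroid α)
    (C D : Finset α) (hC : C ⊆ M.E) (hD : D ⊆ M.E) (hCD : Disjoint C D)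
    (hNE : N.E = (M.E \ C) \ D)
    (hNr : ∀ Y ⊆ N.E, N.r Y = M.r (Y ∪ C) - M.r C) :
    N.pathwidth ≤ M.pathwidth :=
  pathwidth_minor_le_general M N C D hC hNE hNr
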